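/- Let n ≥ 1, let p, q ∈ [n], and let H be the two-branch H-vertex gadget graph with parameters (n,p,q). For every b ∈ {0,1,…,n}, the set A := {u_1^1,…,u_1^p} ∪ {w_1^{p+1},…,w_1^n} ∪ {u_2^1,…,u_2^b} ∪ {w_2^{b+1},…,w_2^n} is a 2n-independent set of H, and the set (A \ {u_1^p}) ∪ {h} is an independent set of H if and only if b = q. Consequently, since u_1^p is adjacent to h, sliding the token on u_1^p onto h is a valid move in the token-sliding reconfiguration graph TS_{2n}(H) if and only if b = q. -/
import Mathlib


/-- An independent set of a graph, as a finset of pairwise non-adjacent vertices. -/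
def IsIndepF {V : Type*} (H : SimpleGraph V) (I : Finset V) : Prop :=
  ∀ u ∈ I, ∀ v ∈ I, ¬ H.Adj u v

/-- Vertices of the two-branch `H`-vertex gadget: `u_1^t, w_1^t, u_2^t, w_2^t`
for `t ∈ [n]` (0-based indices) and the `H`-type vertex `h`. -/
inductive HVert (n : ℕ) : Type where
  | u1 : Fin n → HVert n
  | w1 : Fin n → HVert n
  | u2 : Fin n → HVert n
  | w2 : Fin n → HVert n
  | h : HVert n
deriving DecidableEq

/-- The two-branch `H`-vertex gadget graph with parameters `(n, p, q)`: the only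
edges join `h` to each vertex of
`{u_1^p,…,u_1^n} ∪ {w_1^1,…,w_1^p} ∪ {u_2^{q+1},…,u_2^n} ∪ {w_2^1,…,w_2^q}`
(1-based indices). -/
def hGadget (n p q : ℕ) : SimpleGraph (HVert n) :=
  SimpleGraph.fromRel (fun a b =>
    match a, b with
    | .h, .u1 t => p ≤ t.val + 1
    | .h, .w1 t => t.val + 1 ≤ p
    | .h, .u2 t => q + 1 ≤ t.val + 1
    | .h, .w2 t => t.val + 1 ≤ q
    | _, _ => False)

/-- Tokens placed at position `p` on branch 1 and position `b` on branch 2: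
`{u_1^1,…,u_1^p} ∪ {w_1^{p+1},…,w_1^n} ∪ {u_2^1,…,u_2^b} ∪ {w_2^{b+1},…,w_2^n}`. -/
def hGadgetSet (n p b : ℕ) : Finset (HVert n) :=
  (Finset.univ.filter (fun i : Fin n => i.val < p)).image HVert.u1 ∪
  (Finset.univ.filter (fun i : Fin n => p ≤ i.val)).image HVert.w1 ∪
  (Finset.univ.filter (fun i : Fin n => i.val < b)).image HVert.u2 ∪
  (Finset.univ.filter (fun i : Fin n => b ≤ i.val)).image HVert.w2

open Finset

lemma cardlt (n p : ℕ) (hpn : p ≤ n) :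
    ((univ : Finset (Fin n)).filter (fun i => i.val < p)).card = p := by
  have : ((univ : Finset (Fin n)).filter (fun i => i.val < p))
      = (range p).attachFin (fun m hm => lt_of_lt_of_le (mem_range.mp hm) hpn) := by
    ext i; simp [Finset.mem_attachFin]
  rw [this, Finset.card_attachFin, Finset.card_range]

lemma cardge (n p : ℕ) (hpn : p ≤ n) :
    ((univ : Finset (Fin n)).filter (fun i => p ≤ i.val)).card = n - p := by
  have := cardlt n p hpn
  have h2 := Finset.card_filter_add_card_filter_not
    (s := (univ : Finset (Fin n))) (p := fun i : Fin n => i.val < p)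
  simp only [not_lt, Finset.card_univ, Fintype.card_fin] at h2
  omega

lemma mem_hGadgetSet {n p b : ℕ} (x : HVert n) :
    x ∈ hGadgetSet n p b ↔ (∃ t : Fin n, t.val < p ∧ x = .u1 t) ∨
      (∃ t : Fin n, p ≤ t.val ∧ x = .w1 t) ∨ (∃ t : Fin n, t.val < b ∧ x = .u2 t) ∨
      (∃ t : Fin n, b ≤ t.val ∧ x = .w2 t) := by
  simp [hGadgetSet, eq_comm, or_assoc]

theorem hGadget_slide_iff
    (n p q : ℕ) (hn : 1 ≤ n) (hp1 : 1 ≤ p) (hpn : p ≤ n) (hq1 : 1 ≤ q) (hqn : q ≤ n)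
    (b : ℕ) (hb : b ≤ n) :
    (hGadgetSet n p b).card = 2 * n ∧ IsIndepF (hGadget n p q) (hGadgetSet n p b) ∧
    (hGadget n p q).Adj (HVert.u1 ⟨p - 1, by omega⟩) HVert.h ∧
    (IsIndepF (hGadget n p q)
        ((hGadgetSet n p b).erase (HVert.u1 ⟨p - 1, by omega⟩) ∪ {HVert.h}) ↔ b = q) := by
  have hu1 : Function.Injective (HVert.u1 (n := n)) := fun a c h => by simpa using h
  have hw1 : Function.Injective (HVert.w1 (n := n)) := fun a c h => by simpa using h
  have hu2 : Function.Injective (HVert.u2 (n := n)) := fun a c h => by simpa using h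
  have hw2 : Function.Injective (HVert.w2 (n := n)) := fun a c h => by simpa using h
  refine ⟨?_, ?_, ?_, ?_, ?_⟩
  · rw [hGadgetSet, Finset.card_union_of_disjoint, Finset.card_union_of_disjoint,
      Finset.card_union_of_disjoint, Finset.card_image_of_injective _ hu1,
      Finset.card_image_of_injective _ hw1, Finset.card_image_of_injective _ hu2,
      Finset.card_image_of_injective _ hw2, cardlt n p hpn, cardge n p hpn,
      cardlt n b hb, cardge n b hb]
    · omega
    all_goals
      rw [Finset.disjoint_left]
      rintro a ha hb'
      simp only [Finset.mem_image, Finset.mem_filter, Finset.mem_univ, true_and] at hb'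
      obtain ⟨j, -, rfl⟩ := hb'
      simp [hGadgetSet] at ha
  · intro u hu v hv hadj
    rw [mem_hGadgetSet] at hu hv
    rcases hu with ⟨t, ht, rfl⟩ | (⟨t, ht, rfl⟩ | (⟨t, ht, rfl⟩ | ⟨t, ht, rfl⟩)) <;>
      rcases hv with ⟨s, hs, rfl⟩ | (⟨s, hs, rfl⟩ | (⟨s, hs, rfl⟩ | ⟨s, hs, rfl⟩)) <;>
      simp [hGadget, SimpleGraph.fromRel_adj] at hadj
  · rw [hGadget, SimpleGraph.fromRel_adj]
    refine ⟨by simp, Or.inr ?_⟩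
    show p ≤ p - 1 + 1
    omega
  · intro hind
    by_contra hbq
    rcases Nat.lt_or_ge b q with hlt | hge
    · have hmem : (HVert.w2 ⟨b, by omega⟩ : HVert n) ∈
          (hGadgetSet n p b).erase (HVert.u1 ⟨p - 1, by omega⟩) ∪ {HVert.h} := by
        simp [Finset.mem_erase, mem_hGadgetSet]
      exact hind _ hmem HVert.h (by simp)
        (by simp [hGadget, SimpleGraph.fromRel_adj]; omega)
    · have hlt' : q < b := by omega
      have hmem : (HVert.u2 ⟨q, by omega⟩ : HVert n) ∈
          (hGadgetSet n p b).erase (HVert.u1 ⟨p - 1, by omega⟩) ∪ {HVert.h} := by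
        simp [Finset.mem_erase, mem_hGadgetSet]
        omega
      exact hind _ hmem HVert.h (by simp)
        (by simp [hGadget, SimpleGraph.fromRel_adj])
  · rintro rfl
    intro u hu v hv hadj
    simp only [Finset.mem_union, Finset.mem_erase, Finset.mem_singleton,
      mem_hGadgetSet] at hu hv
    rcases hu with ⟨hune, ⟨t, ht, rfl⟩ | (⟨t, ht, rfl⟩ | (⟨t, ht, rfl⟩ | ⟨t, ht, rfl⟩))⟩ | rfl <;>
      rcases hv with ⟨hvne, ⟨s, hs, rfl⟩ | (⟨s, hs, rfl⟩ | (⟨s, hs, rfl⟩ | ⟨s, hs, rfl⟩))⟩ | rfl <;>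
      simp_all [hGadget, SimpleGraph.fromRel_adj, Fin.ext_iff] <;> omega
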